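/- In a finite cube-free median graph G, for any two distinct vertices u and v, the set L_u(v) of neighbors of v lying in I(u,v) contains either one or two vertices: 1 ≤ |L_u(v)| ≤ 2. -/

import Mathlib

open SimpleGraph Finset

/-- The graph interval `I(u,v)`: vertices on shortest `(u,v)`-paths. -/
def interval {V : Type*} (G : SimpleGraph V) (u v : V) : Set V :=
  {w | G.dist u w + G.dist w v = G.dist u v}

/-- A median graph: connected, and every triple of vertices has a unique median. -/
def IsMedianGraph {V : Type*} (G : SimpleGraph V) : Prop :=
  G.Connected ∧ ∀ x y z : V, ∃! m : V,
    m ∈ interval G x y ∧ m ∈ interval G y z ∧ m ∈ interval G x z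

/-- A set of vertices is (graph) convex if it contains all intervals between its members. -/
def GraphConvex {V : Type*} (G : SimpleGraph V) (S : Set V) : Prop :=
  ∀ u ∈ S, ∀ v ∈ S, interval G u v ⊆ S

/-- A halfspace: a convex set with convex complement. -/
def IsHalfspace {V : Type*} (G : SimpleGraph V) (H : Set V) : Prop :=
  GraphConvex G H ∧ GraphConvex G Hᶜ

/-- The hypercube graph `Q_k`: vertices are `{0,1}^k`, adjacent iff they differ in exactly
one coordinate. -/
def cubeGraph (k : ℕ) : SimpleGraph (Fin k → Fin 2) :=
  SimpleGraph.fromRel (fun a b => ∃! i, a i ≠ b i)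

/-- A graph is cube-free if it has no induced subgraph isomorphic to `Q_3`. -/
def CubeFree {V : Type*} (G : SimpleGraph V) : Prop :=
  ¬ Nonempty (cubeGraph 3 ↪g G)

/-- A 4-cycle of the subgraph of `G` induced by `S`: a 4-element vertex subset of `S`
inducing a cycle of length 4. -/
def IsFourCycleIn {V : Type*} (G : SimpleGraph V) (S : Set V) (t : Finset V) : Prop :=
  (↑t : Set V) ⊆ S ∧ t.card = 4 ∧ Nonempty (G.induce (↑t : Set V) ≃g SimpleGraph.cycleGraph 4)

/-!
In a median graph the distances from `u` of two adjacent vertices differ by exactly one, and no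
two vertices have three common neighbours. If `v` had three neighbours `w₁, w₂, w₃` one step
closer to `u`, the median of `w_i, w_j, u` would complete a square below `v` for each pair, and
the median of the three bottom vertices of these squares would close a copy of `Q₃`; the two
facts above show that this copy is induced. The first step of a geodesic from `v` to `u` gives
at least one such neighbour.
-/

lemma cubeGraph_adj_iff {k : ℕ} {x y : Fin k → Fin 2} :
    (cubeGraph k).Adj x y ↔ hammingDist x y = 1 := by
  have h : ∀ x y : Fin k → Fin 2, (∃! i, x i ≠ y i) ↔ hammingDist x y = 1 := fun x y => by
    simp [hammingDist, Finset.card_eq_one_iff_existsUnique]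
  rw [cubeGraph, SimpleGraph.fromRel_adj, h, h, hammingDist_comm y x, or_self,
    and_iff_right_of_imp]
  rintro h rfl
  simp at h

lemma cubeGraph_three_neighborSet_injective : Function.Injective (cubeGraph 3).neighborSet := by
  intro x y hxy
  have hN : ∀ z, hammingDist x z = 1 ↔ hammingDist y z = 1 := fun z => by
    simpa [cubeGraph_adj_iff] using Set.ext_iff.mp hxy z
  have key : ∀ x y : Fin 3 → Fin 2,
      (∀ z, hammingDist x z = 1 ↔ hammingDist y z = 1) → x = y := by decide
  exact key x y hN

lemma SimpleGraph.nonempty_embedding_of_adj_iff {W V : Type*} {H : SimpleGraph W}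
    {G : SimpleGraph V} (hH : Function.Injective H.neighborSet) (f : W → V)
    (hf : ∀ x y, G.Adj (f x) (f y) ↔ H.Adj x y) : Nonempty (H ↪g G) := by
  refine ⟨⟨⟨f, fun x y hxy => hH ?_⟩, hf _ _⟩⟩
  ext z
  rw [mem_neighborSet, mem_neighborSet, ← hf, ← hf, hxy]

section Interval

variable {V : Type*} {G : SimpleGraph V} {u v w a b m : V}

lemma mem_interval_iff : w ∈ interval G u v ↔ G.dist u w + G.dist w v = G.dist u v := Iff.rfl

lemma mem_interval_iff_of_adj (hwv : G.Adj w v) :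
    w ∈ interval G u v ↔ G.dist u w + 1 = G.dist u v := by
  rw [mem_interval_iff, dist_eq_one_iff_adj.mpr hwv]

lemma eq_or_eq_of_mem_interval_of_adj (hc : G.Connected) (hab : G.Adj a b)
    (hm : m ∈ interval G a b) : m = a ∨ m = b := by
  rw [mem_interval_iff, dist_eq_one_iff_adj.mpr hab] at hm
  rcases Nat.eq_zero_or_pos (G.dist a m) with h | h
  · exact Or.inl (hc.dist_eq_zero_iff.mp h).symm
  · exact Or.inr (hc.dist_eq_zero_iff.mp (by omega))

lemma SimpleGraph.Connected.exists_adj_dist_add_one (hc : G.Connected) (huv : u ≠ v) :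
    ∃ w, G.Adj v w ∧ G.dist u w + 1 = G.dist u v := by
  obtain ⟨p, hp⟩ := hc.exists_walk_length_eq_dist v u
  cases p with
  | nil => exact absurd rfl huv
  | @cons _ w _ hvw q =>
    refine ⟨w, hvw, le_antisymm ?_ ?_⟩
    · have := SimpleGraph.dist_le q
      rw [Walk.length_cons] at hp
      rw [dist_comm, dist_comm (u := u)]
      omega
    · have := hc.dist_triangle (u := u) (v := w) (w := v)
      rwa [dist_eq_one_iff_adj.mpr hvw.symm] at this

end Interval

namespace IsMedianGraph

variable {V : Type*} {G : SimpleGraph V} {u v w₁ w₂ w₃ x y a b c : V}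

lemma dist_add_one_eq_or_of_adj (hG : IsMedianGraph G) (hxy : G.Adj x y) (u : V) :
    G.dist u x + 1 = G.dist u y ∨ G.dist u y + 1 = G.dist u x := by
  obtain ⟨m, ⟨hux, hxy', huy⟩, -⟩ := hG.2 u x y
  rcases eq_or_eq_of_mem_interval_of_adj hG.1 hxy hxy' with rfl | rfl
  · exact Or.inl ((mem_interval_iff_of_adj hxy).mp huy)
  · exact Or.inr ((mem_interval_iff_of_adj hxy.symm).mp hux)

lemma not_adj_of_dist_ne (hG : IsMedianGraph G) (h₁ : G.dist u x + 1 ≠ G.dist u y)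
    (h₂ : G.dist u y + 1 ≠ G.dist u x) : ¬G.Adj x y := fun hxy =>
  (hG.dist_add_one_eq_or_of_adj hxy u).elim h₁ h₂

lemma not_adj_of_adj_of_adj (hG : IsMedianGraph G) (hxa : G.Adj x a) (hxb : G.Adj x b) :
    ¬G.Adj a b := by
  have hab : G.dist x a = G.dist x b := by
    rw [dist_eq_one_iff_adj.mpr hxa, dist_eq_one_iff_adj.mpr hxb]
  exact hG.not_adj_of_dist_ne (u := x) (by omega) (by omega)

lemma dist_eq_two_of_adj_of_adj (hG : IsMedianGraph G) (hxa : G.Adj x a) (hxb : G.Adj x b)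
    (hab : a ≠ b) : G.dist a b = 2 := by
  have h₁ := hG.1.one_lt_dist_of_ne_of_not_adj hab (hG.not_adj_of_adj_of_adj hxa hxb)
  have h₂ := hG.1.dist_triangle (u := a) (v := x) (w := b)
  rw [dist_eq_one_iff_adj.mpr hxa.symm, dist_eq_one_iff_adj.mpr hxb] at h₂
  omega

lemma mem_interval_of_adj_of_adj (hG : IsMedianGraph G) (hxa : G.Adj x a) (hxb : G.Adj x b)
    (hab : a ≠ b) : x ∈ interval G a b := by
  rw [mem_interval_iff, hG.dist_eq_two_of_adj_of_adj hxa hxb hab,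
    dist_eq_one_iff_adj.mpr hxa.symm, dist_eq_one_iff_adj.mpr hxb]

/-- Median graphs contain no `K₂,₃`: both `x` and `y` would be the median of `a`, `b`, `c`. -/
lemma eq_of_adj_of_adj_of_adj (hG : IsMedianGraph G) (hab : a ≠ b) (hac : a ≠ c) (hbc : b ≠ c)
    (hxa : G.Adj x a) (hxb : G.Adj x b) (hxc : G.Adj x c)
    (hya : G.Adj y a) (hyb : G.Adj y b) (hyc : G.Adj y c) : x = y :=
  (hG.2 a b c).unique
    ⟨hG.mem_interval_of_adj_of_adj hxa hxb hab, hG.mem_interval_of_adj_of_adj hxb hxc hbc,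
      hG.mem_interval_of_adj_of_adj hxa hxc hac⟩
    ⟨hG.mem_interval_of_adj_of_adj hya hyb hab, hG.mem_interval_of_adj_of_adj hyb hyc hbc,
      hG.mem_interval_of_adj_of_adj hya hyc hac⟩

/-- The median of `a`, `b` and `u` completes the square below `x`. -/
lemma exists_adj_adj_dist_add_one (hG : IsMedianGraph G) (hxa : G.Adj x a) (hxb : G.Adj x b)
    (hab : a ≠ b) (ha : G.dist u a + 1 = G.dist u x) (hb : G.dist u b + 1 = G.dist u x) :
    ∃ m, G.Adj a m ∧ G.Adj b m ∧ G.dist u m + 1 = G.dist u a := by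
  obtain ⟨m, ⟨hab', hbu, hau⟩, -⟩ := hG.2 a b u
  rw [mem_interval_iff, hG.dist_eq_two_of_adj_of_adj hxa hxb hab,
    SimpleGraph.dist_comm (u := m)] at hab'
  rw [mem_interval_iff, dist_comm (u := b) (v := u), dist_comm (u := m) (v := u)] at hbu
  rw [mem_interval_iff, dist_comm (u := a) (v := u), dist_comm (u := m) (v := u)] at hau
  have ham : G.dist a m = 1 := by omega
  have hbm : G.dist b m = 1 := by omega
  exact ⟨m, dist_eq_one_iff_adj.mp ham, dist_eq_one_iff_adj.mp hbm, by omega⟩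

lemma exists_adj_adj_adj (hG : IsMedianGraph G) (hab : G.dist a b = 2) (hbc : G.dist b c = 2)
    (hac : G.dist a c = 2) : ∃ m, G.Adj a m ∧ G.Adj b m ∧ G.Adj c m := by
  obtain ⟨m, ⟨hab', hbc', hac'⟩, -⟩ := hG.2 a b c
  rw [mem_interval_iff, hab, SimpleGraph.dist_comm (u := m)] at hab'
  rw [mem_interval_iff, hbc] at hbc'
  rw [mem_interval_iff, hac] at hac'
  exact ⟨m, dist_eq_one_iff_adj.mp (by omega), dist_eq_one_iff_adj.mp (by omega),
    dist_eq_one_iff_adj.mp (by rw [SimpleGraph.dist_comm]; omega)⟩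

/-- The bottom of the square below `x` on `a`, `b` is the median of `a`, `b`, `c`. -/
lemma exists_adj_adj_adj_dist_add_one (hG : IsMedianGraph G) (hxa : G.Adj x a)
    (hxb : G.Adj x b) (hxc : ¬G.Adj x c) (hab : a ≠ b) (ha : G.dist u a + 1 = G.dist u x)
    (hb : G.dist u b + 1 = G.dist u x) (hac : G.dist a c = 2) (hbc : G.dist b c = 2) :
    ∃ t, G.Adj a t ∧ G.Adj b t ∧ G.Adj c t ∧ G.dist u t + 1 = G.dist u a := by
  obtain ⟨t, hat, hbt, hct⟩ :=
    hG.exists_adj_adj_adj (hG.dist_eq_two_of_adj_of_adj hxa hxb hab) hbc hac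
  obtain ⟨s, has, hbs, hs⟩ := hG.exists_adj_adj_dist_add_one hxa hxb hab ha hb
  obtain rfl : t = s := by
    by_contra hts
    have hxt : x ≠ t := fun h => hxc (h ▸ hct.symm)
    have hxs : x ≠ s := fun h => by rw [← h] at hs; omega
    exact hab (hG.eq_of_adj_of_adj_of_adj hxt hxs hts hxa.symm hat has hxb.symm hbt hbs)
  exact ⟨t, hat, hbt, hct, hs⟩

lemma nonempty_cubeGraph_embedding_of_adj_dist_add_one (hG : IsMedianGraph G)
    (h₁ : G.Adj v w₁) (h₂ : G.Adj v w₂) (h₃ : G.Adj v w₃)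
    (h₁₂ : w₁ ≠ w₂) (h₁₃ : w₁ ≠ w₃) (h₂₃ : w₂ ≠ w₃)
    (hl₁ : G.dist u w₁ + 1 = G.dist u v) (hl₂ : G.dist u w₂ + 1 = G.dist u v)
    (hl₃ : G.dist u w₃ + 1 = G.dist u v) :
    Nonempty (cubeGraph 3 ↪g G) := by
  obtain ⟨a, ha₁, ha₂, hla⟩ := hG.exists_adj_adj_dist_add_one h₁ h₂ h₁₂ hl₁ hl₂
  obtain ⟨b, hb₁, hb₃, hlb⟩ := hG.exists_adj_adj_dist_add_one h₁ h₃ h₁₃ hl₁ hl₃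
  obtain ⟨c, hc₂, hc₃, hlc⟩ := hG.exists_adj_adj_dist_add_one h₂ h₃ h₂₃ hl₂ hl₃
  -- Otherwise `v` and a vertex two levels below it would share the neighbours `w₁, w₂, w₃`.
  have hn₁c : ¬G.Adj w₁ c := fun h => by
    have := congrArg (G.dist u) (hG.eq_of_adj_of_adj_of_adj h₁₂ h₁₃ h₂₃
      h.symm hc₂.symm hc₃.symm h₁ h₂ h₃)
    omega
  have hn₂b : ¬G.Adj w₂ b := fun h => by
    have := congrArg (G.dist u) (hG.eq_of_adj_of_adj_of_adj h₁₂ h₁₃ h₂₃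
      hb₁.symm h.symm hb₃.symm h₁ h₂ h₃)
    omega
  have hn₃a : ¬G.Adj w₃ a := fun h => by
    have := congrArg (G.dist u) (hG.eq_of_adj_of_adj_of_adj h₁₂ h₁₃ h₂₃
      ha₁.symm ha₂.symm h.symm h₁ h₂ h₃)
    omega
  have hab : a ≠ b := fun h => hn₃a (by rwa [h])
  have hac : a ≠ c := fun h => hn₁c (by rwa [← h])
  have hbc : b ≠ c := fun h => hn₁c (by rwa [← h])
  obtain ⟨t, hat, hbt, hct, hlt⟩ :=
    hG.exists_adj_adj_adj_dist_add_one ha₁ hb₁ hn₁c hab hla hlb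
    (hG.dist_eq_two_of_adj_of_adj ha₂ hc₂ hac) (hG.dist_eq_two_of_adj_of_adj hb₃ hc₃ hbc)
  -- `x : Fin 3 → Fin 2` is sent to the vertex reached from `v` by stepping down towards
  -- `w_{i+1}` for each `i` with `x i = 1`.
  refine SimpleGraph.nonempty_embedding_of_adj_iff cubeGraph_three_neighborSet_injective
    (fun x => ![![![v, w₃], ![w₂, c]], ![![w₁, b], ![a, t]]] (x 0) (x 1) (x 2)) fun x y => ?_
  rw [cubeGraph_adj_iff]
  obtain ⟨x₀, x₁, x₂, rfl⟩ : ∃ x₀ x₁ x₂, x = ![x₀, x₁, x₂] :=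
    ⟨x 0, x 1, x 2, by ext i; fin_cases i <;> rfl⟩
  obtain ⟨y₀, y₁, y₂, rfl⟩ : ∃ y₀ y₁ y₂, y = ![y₀, y₁, y₂] :=
    ⟨y 0, y 1, y 2, by ext i; fin_cases i <;> rfl⟩
  fin_cases x₀ <;> fin_cases x₁ <;> fin_cases x₂ <;> fin_cases y₀ <;> fin_cases y₁ <;>
    fin_cases y₂ <;>
    simp only [Fin.zero_eta, Fin.mk_one, Matrix.cons_val_zero, Matrix.cons_val_one,
      Matrix.cons_val_two, Matrix.tail_cons, Matrix.head_cons] <;>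
    -- Non-edges of the cube join vertices whose levels differ by other than one,
    -- except for the three pairs excluded above by `K₂,₃`-freeness.
    first
      | exact iff_of_true ‹_› (by decide)
      | exact iff_of_true (G.adj_symm ‹_›) (by decide)
      | exact iff_of_false ‹_› (by decide)
      | exact iff_of_false (fun h => ‹¬G.Adj _ _› h.symm) (by decide)
      | exact iff_of_false
          (hG.not_adj_of_dist_ne (u := u) (by omega) (by omega)) (by decide)

end IsMedianGraph

lemma Set.one_le_ncard_and_ncard_le_two {α : Type*} {s : Set α} (hne : s.Nonempty)
    (h : ∀ x ∈ s, ∀ y ∈ s, ∀ z ∈ s, x = y ∨ x = z ∨ y = z) :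
    1 ≤ s.ncard ∧ s.ncard ≤ 2 := by
  obtain ⟨x, hx⟩ := hne
  obtain ⟨y, hsub⟩ : ∃ y, s ⊆ {x, y} := by
    by_cases hy : ∃ y ∈ s, y ≠ x
    · obtain ⟨y, hy, hyx⟩ := hy
      refine ⟨y, fun z hz => ?_⟩
      rcases h x hx y hy z hz with h | h | h
      · exact absurd h.symm hyx
      · exact Or.inl h.symm
      · exact Or.inr h.symm
    · refine ⟨x, fun z hz => Or.inl ?_⟩
      exact not_ne_iff.mp fun hzx => hy ⟨z, hz, hzx⟩
  have hfin : s.Finite := (Set.toFinite _).subset hsub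
  refine ⟨(Set.ncard_pos hfin).mpr ⟨x, hx⟩, (Set.ncard_le_ncard hsub).trans ?_⟩
  exact (Set.ncard_insert_le _ _).trans (by rw [Set.ncard_singleton])

theorem Lu_card_le_two_general {V : Type*} (G : SimpleGraph V)
    (hG : IsMedianGraph G) (hcf : CubeFree G) (u v : V) (huv : u ≠ v) :
    1 ≤ {w : V | G.Adj v w ∧ w ∈ interval G u v}.ncard ∧
      {w : V | G.Adj v w ∧ w ∈ interval G u v}.ncard ≤ 2 := by
  apply Set.one_le_ncard_and_ncard_le_two
  · obtain ⟨w, hvw, hw⟩ := hG.1.exists_adj_dist_add_one huv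
    exact ⟨w, hvw, (mem_interval_iff_of_adj hvw.symm).mpr hw⟩
  · rintro x ⟨hx, hux⟩ y ⟨hy, huy⟩ z ⟨hz, huz⟩
    by_contra! hxyz
    exact hcf (hG.nonempty_cubeGraph_embedding_of_adj_dist_add_one hx hy hz hxyz.1 hxyz.2.1 hxyz.2.2
      ((mem_interval_iff_of_adj hx.symm).mp hux) ((mem_interval_iff_of_adj hy.symm).mp huy)
      ((mem_interval_iff_of_adj hz.symm).mp huz))

/-- In a finite cube-free median graph, for distinct vertices `u ≠ v`, the set
`L_u(v)` of neighbors of `v` in `I(u,v)` has one or two elements. -/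
theorem Lu_card_le_two {V : Type*} [Fintype V] (G : SimpleGraph V)
    (hG : IsMedianGraph G) (hcf : CubeFree G) (u v : V) (huv : u ≠ v) :
    1 ≤ {w : V | G.Adj v w ∧ w ∈ interval G u v}.ncard ∧
      {w : V | G.Adj v w ∧ w ∈ interval G u v}.ncard ≤ 2 :=
  Lu_card_le_two_general G hG hcf u v huv
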